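/- Supplementarity identity: the linear map on C² given by m_Z ∘ (R_X(π/2) ⊗ R_X(π/2)) ∘ δ_Z (Z-copy, followed by X-phase gates of angle π/2 on each branch, followed by Z-multiplication) equals a nonzero complex scalar multiple of |−⟩⟨−|, where |−⟩ = (1/√2)(|0⟩ − |1⟩). -/
import Mathlib


open Matrix Complex
open scoped Kronecker

/-- Z-copy `δ_Z : C² → C²⊗C²`, `|i⟩ ↦ |ii⟩`, as a matrix. -/
def dZ : Matrix (Fin 2 × Fin 2) (Fin 2) ℂ :=
  Matrix.of fun p i => if p.1 = i ∧ p.2 = i then 1 else 0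

/-- Z-multiplication `m_Z : C²⊗C² → C²`, `|ij⟩ ↦ δ_{ij}|i⟩`, as a matrix. -/
def mZ : Matrix (Fin 2) (Fin 2 × Fin 2) ℂ :=
  Matrix.of fun i p => if p.1 = i ∧ p.2 = i then 1 else 0

/-- `R_X(π/2) = |+⟩⟨+| + i|−⟩⟨−|`. -/
noncomputable def RXq : Matrix (Fin 2) (Fin 2) ℂ :=
  (2 : ℂ)⁻¹ • !![1 + Complex.I, 1 - Complex.I; 1 - Complex.I, 1 + Complex.I]

/-- The projector `|−⟩⟨−|` where `|−⟩ = (1/√2)(|0⟩−|1⟩)`. -/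
noncomputable def Pminus : Matrix (Fin 2) (Fin 2) ℂ := (2 : ℂ)⁻¹ • !![1, -1; -1, 1]

/-- Supplementarity: `m_Z ∘ (R_X(π/2) ⊗ R_X(π/2)) ∘ δ_Z` is a nonzero scalar
multiple of `|−⟩⟨−|`. -/
theorem supplementarity :
    ∃ c : ℂ, c ≠ 0 ∧ mZ * (RXq ⊗ₖ RXq) * dZ = c • Pminus := by
  refine ⟨Complex.I, Complex.I_ne_zero, ?_⟩
  ext i j
  fin_cases i <;> fin_cases j <;>
    simp [mZ, dZ, RXq, Pminus, Matrix.mul_apply, Matrix.kroneckerMap_apply,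
      Fintype.sum_prod_type, Fin.sum_univ_succ, Complex.ext_iff] <;> norm_num
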